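/- arXiv:2311.04378 — 2 statements merged into one kernel-verified Lean document; each statement's English description precedes it below -/
import Mathlib

section
/- Let P be a reversible, irreducible, aperiodic transition matrix on a finite state space with unique stationary distribution π, let λ* = max over non-principal eigenvalues of |λ|, and let π_min = min_i π(i). Then for every initial distribution p_0 and every t ≥ 0, ‖(Pᵀ)^t p_0 − π‖_TV ≤ (1/(2√π_min)) · (λ*)^t. -/
open Matrix Finset
open RealInnerProductSpace

lemma aux_harmonic (n : ℕ) (P : Matrix (Fin n) (Fin n) ℝ)
    (hP0 : ∀ i j, 0 ≤ P i j) (hProw : ∀ i, ∑ j, P i j = 1)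
    (hirr : ∀ i j, ∃ t : ℕ, 1 ≤ t ∧ 0 < (P ^ t) i j)
    (u : Fin n → ℝ) (hu : P *ᵥ u = u) : ∀ i j, u i = u j := by
  have hpow0 : ∀ t i j, 0 ≤ (P ^ t) i j := by
    intro t
    induction t with
    | zero => intro i j; simp [Matrix.one_apply]; positivity
    | succ t ih =>
      intro i j
      rw [pow_succ, Matrix.mul_apply]
      exact Finset.sum_nonneg fun k _ => mul_nonneg (ih i k) (hP0 k j)
  have hpowrow : ∀ t i, ∑ j, (P ^ t) i j = 1 := by
    intro t
    induction t with
    | zero => intro i; simp [Matrix.one_apply]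
    | succ t ih =>
      intro i
      simp only [pow_succ, Matrix.mul_apply]
      rw [Finset.sum_comm]
      have : ∀ k : Fin n, ∑ j : Fin n, (P ^ t) i k * P k j = (P ^ t) i k := by
        intro k; rw [← Finset.mul_sum, hProw, mul_one]
      rw [Finset.sum_congr rfl fun k _ => this k, ih]
  have hupow : ∀ t, (P ^ t) *ᵥ u = u := by
    intro t
    induction t with
    | zero => simp
    | succ t ih => rw [pow_succ', ← Matrix.mulVec_mulVec, ih, hu]
  intro i j
  obtain ⟨i0, -, hi0⟩ := Finset.exists_max_image (univ : Finset (Fin n)) u ⟨i, mem_univ i⟩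
  have key : ∀ k, u k = u i0 := by
    intro k
    obtain ⟨t, -, ht⟩ := hirr i0 k
    have h1 : ∑ j, (P ^ t) i0 j * u j = u i0 := by
      have := congrFun (hupow t) i0
      simpa [Matrix.mulVec, dotProduct] using this
    have h2 : ∑ j, (P ^ t) i0 j * (u i0 - u j) = 0 := by
      simp only [mul_sub, Finset.sum_sub_distrib, h1, ← Finset.sum_mul, hpowrow t i0, one_mul,
        sub_self]
    have h3 := (Finset.sum_eq_zero_iff_of_nonneg (fun j _ =>
      mul_nonneg (hpow0 t i0 j) (sub_nonneg.2 (hi0 j (mem_univ j))))).1 h2 k (mem_univ k)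
    rcases mul_eq_zero.1 h3 with h | h
    · exact absurd h (ne_of_gt ht)
    · linarith [sub_eq_zero.1 h]
  rw [key i, key j]


lemma aux_spectral (n : ℕ) (S : Matrix (Fin n) (Fin n) ℝ) (hS : S.IsHermitian)
    (lam : ℝ) (hlam : 0 ≤ lam) (v : Fin n → ℝ)
    (hcond : ∀ (μ : ℝ) (w : Fin n → ℝ), w ≠ 0 → S *ᵥ w = μ • w →
      |μ| ≤ lam ∨ ∃ c : ℝ, w = fun i => c * v i)
    (x : Fin n → ℝ) (hx : ∑ i, v i * x i = 0) (t : ℕ) :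
    ∑ i, (((S ^ t) *ᵥ x) i) ^ 2 ≤ (lam ^ t) ^ 2 * ∑ i, x i ^ 2 := by
  classical
  set b := hS.eigenvectorBasis with hb
  set μ := hS.eigenvalues with hμ
  have hmv : ∀ k, S *ᵥ ⇑(b k) = μ k • ⇑(b k) := fun k => hS.mulVec_eigenvectorBasis k
  have hSt : Sᵀ = S := by
    ext i j
    rw [Matrix.transpose_apply]
    conv_rhs => rw [← hS.eq]
    simp [Matrix.conjTranspose_apply]
  have hpow : ∀ (k : Fin n) (s : ℕ), (S ^ s) *ᵥ ⇑(b k) = (μ k) ^ s • ⇑(b k) := by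
    intro k s
    induction s with
    | zero => simp
    | succ s ih =>
      rw [pow_succ', ← Matrix.mulVec_mulVec, ih, Matrix.mulVec_smul, hmv, smul_smul, ← pow_succ]
  have hinner : ∀ a y : EuclideanSpace ℝ (Fin n), ⟪a, y⟫ = ∑ i, a i * y i := by
    intro a y
    simp [PiLp.inner_apply, RCLike.inner_apply, starRingEnd_apply]
    exact Finset.sum_congr rfl fun i _ => mul_comm _ _
  have hnormsq : ∀ y : EuclideanSpace ℝ (Fin n), ∑ i, (y i) ^ 2 = ‖y‖ ^ 2 := by
    intro y
    rw [EuclideanSpace.norm_eq, Real.sq_sqrt (by positivity)]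
    simp [sq_abs]
  have hrepr : ∀ (y : Fin n → ℝ) (k : Fin n),
      b.repr (WithLp.toLp 2 y : EuclideanSpace ℝ (Fin n)) k = ∑ i, (b k) i * y i := by
    intro y k
    rw [b.repr_apply_apply, hinner]
  have hkey : ∀ k, b.repr (WithLp.toLp 2 (S ^ t *ᵥ x : Fin n → ℝ) : EuclideanSpace ℝ (Fin n)) k
      = (μ k) ^ t * b.repr (WithLp.toLp 2 x : EuclideanSpace ℝ (Fin n)) k := by
    intro k
    rw [hrepr, hrepr]
    have h1 : ∑ i, (b k) i * (S ^ t *ᵥ x) i = ⇑(b k) ⬝ᵥ (S ^ t *ᵥ x) := rfl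
    have h2 : ((S ^ t)ᵀ : Matrix (Fin n) (Fin n) ℝ) = S ^ t := by
      rw [Matrix.transpose_pow, hSt]
    rw [h1, Matrix.dotProduct_mulVec, ← Matrix.mulVec_transpose, h2, hpow k t,
      smul_dotProduct]
    simp [dotProduct, Finset.mul_sum]
  have hx2 : ∑ k, (b.repr (WithLp.toLp 2 x : EuclideanSpace ℝ (Fin n)) k) ^ 2 = ∑ i, x i ^ 2 := by
    rw [hnormsq, (b.repr).norm_map (WithLp.toLp 2 x : EuclideanSpace ℝ (Fin n))]
    exact (hnormsq (WithLp.toLp 2 x : EuclideanSpace ℝ (Fin n))).symm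
  have hSt2 : ∑ i, ((S ^ t *ᵥ x) i) ^ 2
      = ∑ k, ((μ k) ^ t * b.repr (WithLp.toLp 2 x : EuclideanSpace ℝ (Fin n)) k) ^ 2 := by
    rw [hnormsq (WithLp.toLp 2 (S ^ t *ᵥ x : Fin n → ℝ) : EuclideanSpace ℝ (Fin n)),
      ← (b.repr).norm_map (WithLp.toLp 2 (S ^ t *ᵥ x : Fin n → ℝ) : EuclideanSpace ℝ (Fin n)),
      ← hnormsq (b.repr (WithLp.toLp 2 (S ^ t *ᵥ x : Fin n → ℝ) : EuclideanSpace ℝ (Fin n)))]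
    exact Finset.sum_congr rfl fun k _ => by rw [hkey k]
  rw [hSt2, ← hx2, Finset.mul_sum]
  apply Finset.sum_le_sum
  intro k _
  rcases hcond (μ k) (b k) ((WithLp.ofLp_eq_zero (p := 2)).not.2 (b.orthonormal.ne_zero k)) (hmv k) with h | ⟨c, hc⟩
  · have h2 : (μ k) ^ 2 ≤ lam ^ 2 := by nlinarith [sq_abs (μ k), abs_nonneg (μ k)]
    have h3 : ((μ k) ^ 2) ^ t ≤ (lam ^ 2) ^ t := pow_le_pow_left₀ (sq_nonneg _) h2 t
    have h4 : ((μ k) ^ t) ^ 2 ≤ (lam ^ t) ^ 2 := by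
      rw [← pow_mul, ← pow_mul, mul_comm] at h3
      rw [← pow_mul, ← pow_mul]
      exact h3
    calc ((μ k) ^ t * b.repr (WithLp.toLp 2 x : EuclideanSpace ℝ (Fin n)) k) ^ 2
        = ((μ k) ^ t) ^ 2 * (b.repr (WithLp.toLp 2 x : EuclideanSpace ℝ (Fin n)) k) ^ 2 := by ring
      _ ≤ (lam ^ t) ^ 2 * (b.repr (WithLp.toLp 2 x : EuclideanSpace ℝ (Fin n)) k) ^ 2 := by
          nlinarith [sq_nonneg (b.repr (WithLp.toLp 2 x : EuclideanSpace ℝ (Fin n)) k)]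
  · have hz : b.repr (WithLp.toLp 2 x : EuclideanSpace ℝ (Fin n)) k = 0 := by
      rw [hrepr]
      have h5 : ∀ i, (b k) i * x i = c * (v i * x i) := by
        intro i; rw [show (b k) i = c * v i from congrFun hc i]; ring
      rw [Finset.sum_congr rfl fun i _ => h5 i, ← Finset.mul_sum, hx, mul_zero]
    rw [hz]
    simp

/-- Spectral bound on mixing for a reversible, irreducible, aperiodic finite Markov
chain: if every eigenvalue of `P` other than `1` has absolute value at most
`λ* < 1`, then for every initial distribution `p₀` and every `t`,
`‖(Pᵀ)^t p₀ − π‖_TV ≤ (1/(2√π_min)) (λ*)^t`, where `π_min = min_i π i`. -/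

theorem stmt_8 (n : ℕ) (hn : 0 < n) (P : Matrix (Fin n) (Fin n) ℝ)
    (hP0 : ∀ i j, 0 ≤ P i j) (hProw : ∀ i, ∑ j, P i j = 1)
    (π : Fin n → ℝ) (hπpos : ∀ i, 0 < π i) (hπ1 : ∑ i, π i = 1)
    (hstat : Pᵀ *ᵥ π = π)
    (hrev : ∀ i j, π i * P i j = π j * P j i)
    (hirr : ∀ i j, ∃ t : ℕ, 1 ≤ t ∧ 0 < (P ^ t) i j)
    (haper : ∀ i, ∃ s t : ℕ, 0 < (P ^ s) i i ∧ 0 < (P ^ t) i i ∧ Nat.gcd s t = 1)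
    (lamStar : ℝ) (hlam0 : 0 ≤ lamStar) (hlam1 : lamStar < 1)
    (hspec : ∀ μ ∈ spectrum ℝ P, μ = 1 ∨ |μ| ≤ lamStar)
    (πmin : ℝ)
    (hπmin : πmin = Finset.univ.inf' (Finset.univ_nonempty_iff.2 ⟨⟨0, hn⟩⟩) π) :
    ∀ (p₀ : Fin n → ℝ), (∀ i, 0 ≤ p₀ i) → ∑ i, p₀ i = 1 →
      ∀ t : ℕ,
        (1 / 2) * ∑ i, |((Pᵀ ^ t) *ᵥ p₀) i - π i|
          ≤ (1 / (2 * Real.sqrt πmin)) * lamStar ^ t := by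
  intro p₀ hp0 hp1 t
  have hπminle : ∀ i, πmin ≤ π i := fun i => hπmin ▸ Finset.inf'_le _ (mem_univ i)
  have hπminpos : 0 < πmin := by
    obtain ⟨i, -, hi⟩ := Finset.exists_mem_eq_inf' (Finset.univ_nonempty_iff.2 ⟨⟨0, hn⟩⟩) π
    rw [hπmin, hi]; exact hπpos i
  set v : Fin n → ℝ := fun i => Real.sqrt (π i) with hvdef
  have hvpos : ∀ i, 0 < v i := fun i => Real.sqrt_pos.2 (hπpos i)
  have hvsq : ∀ i, v i * v i = π i := fun i => Real.mul_self_sqrt (hπpos i).le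
  set S : Matrix (Fin n) (Fin n) ℝ := Matrix.of (fun i j => v i * P i j / v j) with hSdef
  have hSapp : ∀ i j, S i j = v i * P i j / v j := fun i j => rfl
  have hSsym : ∀ i j, S i j = S j i := by
    intro i j
    rw [hSapp, hSapp, div_eq_div_iff (hvpos j).ne' (hvpos i).ne']
    have h := hrev i j
    rw [← hvsq i, ← hvsq j] at h
    linear_combination h
  have hvS : ∀ i j, v i * S i j = v j * P j i := by
    intro i j
    rw [hSapp, mul_div_assoc']
    rw [div_eq_iff (hvpos j).ne']
    have h := hrev i j
    rw [← hvsq i, ← hvsq j] at h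
    linear_combination h
  have hS : S.IsHermitian := by
    show Sᴴ = S
    ext i j
    rw [Matrix.conjTranspose_apply]
    simpa using hSsym j i
  set x0 : Fin n → ℝ := fun i => (p₀ i - π i) / v i with hx0def
  have hx0app : ∀ i, x0 i = (p₀ i - π i) / v i := fun i => rfl
  have hvx0 : ∀ i, v i * x0 i = p₀ i - π i := by
    intro i; rw [hx0app, mul_div_cancel₀]
    exact (hvpos i).ne'
  -- conjugation identity
  have hPS : ∀ z : Fin n → ℝ, Pᵀ *ᵥ (fun i => v i * z i) = fun i => v i * ((S *ᵥ z) i) := by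
    intro z
    funext i
    show ∑ j, Pᵀ i j * (v j * z j) = v i * ∑ j, S i j * z j
    rw [Finset.mul_sum]
    apply Finset.sum_congr rfl
    intro j _
    rw [Matrix.transpose_apply, show v i * (S i j * z j) = (v i * S i j) * z j by ring, hvS i j]
    ring
  -- evolution identity
  have hE : ∀ (s : ℕ) (i : Fin n), ((Pᵀ ^ s) *ᵥ p₀) i - π i = v i * ((S ^ s *ᵥ x0) i) := by
    intro s
    induction s with
    | zero => intro i; simp [hvx0 i]
    | succ s ih =>
      intro i
      have hw : (Pᵀ ^ s) *ᵥ p₀ = fun j => π j + v j * ((S ^ s *ᵥ x0) j) := by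
        funext j; linarith [ih j]
      rw [pow_succ', ← Matrix.mulVec_mulVec, hw]
      have hsplit : (fun j => π j + v j * ((S ^ s *ᵥ x0) j))
          = π + fun j => v j * ((S ^ s *ᵥ x0) j) := rfl
      rw [hsplit, Matrix.mulVec_add, hstat, hPS]
      simp only [Pi.add_apply]
      rw [pow_succ', ← Matrix.mulVec_mulVec]
      ring
  -- eigenvector condition
  have hcond : ∀ (μ : ℝ) (w : Fin n → ℝ), w ≠ 0 → S *ᵥ w = μ • w →
      |μ| ≤ lamStar ∨ ∃ c : ℝ, w = fun i => c * v i := by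
    intro μ w hw0 hweq
    set u : Fin n → ℝ := fun i => w i / v i with hudef
    have hwu : ∀ i, w i = v i * u i := by
      intro i; rw [show u i = w i / v i from rfl, mul_div_cancel₀]
      exact (hvpos i).ne'
    have hPu : P *ᵥ u = μ • u := by
      funext i
      have key : ∀ j, P i j * u j = (S i j * w j) / v i := by
        intro j
        have h := hvS j i
        rw [hSsym j i] at h
        have hvi := (hvpos i).ne'
        have hvj := (hvpos j).ne'
        show P i j * (w j / v j) = S i j * w j / v i
        field_simp
        linear_combination (-(w j)) * h
      show ∑ j, P i j * u j = μ * u i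
      rw [Finset.sum_congr rfl fun j _ => key j, ← Finset.sum_div,
        show ∑ j, S i j * w j = (S *ᵥ w) i from rfl, hweq]
      show (μ * w i) / v i = μ * (w i / v i)
      ring
    have hu0 : u ≠ 0 := by
      intro h
      apply hw0
      funext i
      rw [hwu i, congrFun h i]
      simp
    have hμspec : μ ∈ spectrum ℝ P := by
      rw [spectrum.mem_iff]
      intro hunit
      rw [Matrix.isUnit_iff_isUnit_det] at hunit
      have hdet : (algebraMap ℝ (Matrix (Fin n) (Fin n) ℝ) μ - P).det = 0 := by
        rw [← Matrix.exists_mulVec_eq_zero_iff]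
        refine ⟨u, hu0, ?_⟩
        rw [Matrix.sub_mulVec, Algebra.algebraMap_eq_smul_one, Matrix.smul_mulVec,
          Matrix.one_mulVec, hPu]
        simp
      rw [hdet] at hunit
      simp at hunit
    rcases hspec μ hμspec with h1 | h2
    · right
      subst h1
      have hPuu : P *ᵥ u = u := by rw [hPu]; simp
      have hconst := aux_harmonic n P hP0 hProw hirr u hPuu
      refine ⟨u ⟨0, hn⟩, ?_⟩
      funext i
      rw [hwu i, hconst i ⟨0, hn⟩]
      ring
    · left; exact h2
  -- orthogonality
  have hx0orth : ∑ i, v i * x0 i = 0 := by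
    rw [Finset.sum_congr rfl fun i _ => hvx0 i, Finset.sum_sub_distrib, hp1, hπ1, sub_self]
  have hbound := aux_spectral n S hS lamStar hlam0 v hcond x0 hx0orth t
  -- bound on ∑ x0²
  have hple : ∀ i, p₀ i ≤ 1 := by
    intro i
    rw [← hp1]
    exact Finset.single_le_sum (fun j _ => hp0 j) (mem_univ i)
  have hx0sq : ∑ i, x0 i ^ 2 ≤ 1 / πmin := by
    have h1 : ∀ i, x0 i ^ 2 = p₀ i ^ 2 / π i - 2 * p₀ i + π i := by
      intro i
      rw [hx0app, div_pow, sq (v i), hvsq i]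
      field_simp [(hπpos i).ne']
      ring
    rw [Finset.sum_congr rfl fun i _ => h1 i]
    rw [Finset.sum_add_distrib, Finset.sum_sub_distrib, ← Finset.mul_sum, hp1, hπ1]
    have h2 : ∑ i, p₀ i ^ 2 / π i ≤ 1 / πmin := by
      calc ∑ i, p₀ i ^ 2 / π i ≤ ∑ i, p₀ i / πmin := by
            apply Finset.sum_le_sum
            intro i _
            apply div_le_div₀ (hp0 i) _ hπminpos (hπminle i)
            nlinarith [hp0 i, hple i]
        _ = 1 / πmin := by rw [← Finset.sum_div, hp1]
    linarith
  -- Cauchy–Schwarz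
  have hsum : ∑ i, |((Pᵀ ^ t) *ᵥ p₀) i - π i| = ∑ i, v i * |(S ^ t *ᵥ x0) i| := by
    apply Finset.sum_congr rfl
    intro i _
    rw [hE t i, abs_mul, abs_of_pos (hvpos i)]
  have hCS := Finset.sum_mul_sq_le_sq_mul_sq Finset.univ v (fun i => |(S ^ t *ᵥ x0) i|)
  have hvsum : ∑ i, v i ^ 2 = 1 := by
    rw [Finset.sum_congr rfl fun i _ => by rw [sq, hvsq i]]
    exact hπ1
  have habs : ∑ i, |(S ^ t *ᵥ x0) i| ^ 2 = ∑ i, ((S ^ t *ᵥ x0) i) ^ 2 := by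
    apply Finset.sum_congr rfl
    intro i _
    rw [sq_abs]
  have hfin : (∑ i, |((Pᵀ ^ t) *ᵥ p₀) i - π i|) ^ 2 ≤ (lamStar ^ t) ^ 2 * (1 / πmin) := by
    rw [hsum]
    calc (∑ i, v i * |(S ^ t *ᵥ x0) i|) ^ 2
        ≤ (∑ i, v i ^ 2) * ∑ i, |(S ^ t *ᵥ x0) i| ^ 2 := hCS
      _ = ∑ i, ((S ^ t *ᵥ x0) i) ^ 2 := by rw [hvsum, one_mul, habs]
      _ ≤ (lamStar ^ t) ^ 2 * ∑ i, x0 i ^ 2 := hbound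
      _ ≤ (lamStar ^ t) ^ 2 * (1 / πmin) := by
          apply mul_le_mul_of_nonneg_left hx0sq (by positivity)
  have hnn : 0 ≤ ∑ i, |((Pᵀ ^ t) *ᵥ p₀) i - π i| :=
    Finset.sum_nonneg fun i _ => abs_nonneg _
  have hs : 0 < Real.sqrt πmin := Real.sqrt_pos.2 hπminpos
  have hle : ∑ i, |((Pᵀ ^ t) *ᵥ p₀) i - π i| ≤ lamStar ^ t / Real.sqrt πmin := by
    rw [← Real.sqrt_sq hnn]
    have h3 := Real.sqrt_le_sqrt hfin
    apply le_trans h3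
    rw [Real.sqrt_mul (sq_nonneg _), Real.sqrt_sq (pow_nonneg hlam0 t), one_div,
      Real.sqrt_inv, ← div_eq_mul_inv]
  rw [show (1 / (2 * Real.sqrt πmin)) * lamStar ^ t = (1 / 2) * (lamStar ^ t / Real.sqrt πmin) by
    field_simp]
  linarith
end

section
/- For a primitive row-stochastic matrix P (some power has all positive entries) on a finite state space, there exists a unique stationary distribution π with all entries positive, and for every initial distribution p₀, (Pᵀ)^t p₀ converges to π as t → ∞. -/
open Matrix Finset Filter

namespace PF14

variable {n : ℕ}

/-- the ℓ¹ norm -/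
noncomputable def NN (x : Fin n → ℝ) : ℝ := ∑ i, |x i|

lemma NN_nonneg (x : Fin n → ℝ) : 0 ≤ NN x :=
  Finset.sum_nonneg fun i _ => abs_nonneg _

lemma abs_le_NN (x : Fin n → ℝ) (i : Fin n) : |x i| ≤ NN x :=
  Finset.single_le_sum (f := fun j => |x j|) (fun j _ => abs_nonneg _) (Finset.mem_univ i)

lemma norm_le_NN (x : Fin n → ℝ) : ‖x‖ ≤ NN x := by
  refine (pi_norm_le_iff_of_nonneg (NN_nonneg x)).2 fun i => ?_
  simpa [Real.norm_eq_abs] using abs_le_NN x i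

lemma NN_sub_le (x y : Fin n → ℝ) : NN (x - y) ≤ NN x + NN y := by
  rw [NN, NN, NN, ← Finset.sum_add_distrib]
  exact Finset.sum_le_sum fun i _ => abs_sub (x i) (y i)

lemma mulVecT_apply (P : Matrix (Fin n) (Fin n) ℝ) (x : Fin n → ℝ) (j : Fin n) :
    (Pᵀ *ᵥ x) j = ∑ i, P i j * x i := by
  simp [Matrix.mulVec, dotProduct, Matrix.transpose_apply]

lemma sum_mulVecT (P : Matrix (Fin n) (Fin n) ℝ) (hProw : ∀ i, ∑ j, P i j = 1)
    (x : Fin n → ℝ) : ∑ j, (Pᵀ *ᵥ x) j = ∑ i, x i := by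
  simp only [mulVecT_apply]
  rw [Finset.sum_comm]
  refine Finset.sum_congr rfl fun i _ => ?_
  rw [← Finset.sum_mul, hProw, one_mul]

lemma NN_mulVecT_le (P : Matrix (Fin n) (Fin n) ℝ) (h0 : ∀ i j, 0 ≤ P i j)
    (hProw : ∀ i, ∑ j, P i j = 1) (x : Fin n → ℝ) : NN (Pᵀ *ᵥ x) ≤ NN x := by
  calc NN (Pᵀ *ᵥ x) = ∑ j, |∑ i, P i j * x i| := by simp [NN, mulVecT_apply]
    _ ≤ ∑ j, ∑ i, P i j * |x i| := by
        refine Finset.sum_le_sum fun j _ => ?_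
        refine (Finset.abs_sum_le_sum_abs _ _).trans (le_of_eq ?_)
        refine Finset.sum_congr rfl fun i _ => ?_
        rw [abs_mul, abs_of_nonneg (h0 i j)]
    _ = ∑ i, |x i| := by
        rw [Finset.sum_comm]
        refine Finset.sum_congr rfl fun i _ => ?_
        rw [← Finset.sum_mul, hProw, one_mul]

lemma NN_contract (Q : Matrix (Fin n) (Fin n) ℝ) (δ : ℝ)
    (hQ : ∀ i j, δ ≤ Q i j) (hrow : ∀ i, ∑ j, Q i j = 1)
    (x : Fin n → ℝ) (hx : ∑ i, x i = 0) :
    NN (Qᵀ *ᵥ x) ≤ (1 - n * δ) * NN x := by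
  calc NN (Qᵀ *ᵥ x) = ∑ j, |∑ i, (Q i j - δ) * x i| := by
        simp only [NN, mulVecT_apply]
        refine Finset.sum_congr rfl fun j _ => ?_
        congr 1
        simp only [sub_mul, Finset.sum_sub_distrib, ← Finset.mul_sum, hx, mul_zero, sub_zero]
    _ ≤ ∑ j, ∑ i, (Q i j - δ) * |x i| := by
        refine Finset.sum_le_sum fun j _ => ?_
        refine (Finset.abs_sum_le_sum_abs _ _).trans (le_of_eq ?_)
        refine Finset.sum_congr rfl fun i _ => ?_
        rw [abs_mul, abs_of_nonneg (sub_nonneg.2 (hQ i j))]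
    _ = ∑ i, (1 - n * δ) * |x i| := by
        rw [Finset.sum_comm]
        refine Finset.sum_congr rfl fun i _ => ?_
        rw [← Finset.sum_mul]
        congr 1
        rw [Finset.sum_sub_distrib, hrow, Finset.sum_const, Finset.card_univ,
          Fintype.card_fin, nsmul_eq_mul]
    _ = (1 - n * δ) * NN x := by rw [NN, Finset.mul_sum]

lemma pow_stoch (P : Matrix (Fin n) (Fin n) ℝ) (h0 : ∀ i j, 0 ≤ P i j)
    (hProw : ∀ i, ∑ j, P i j = 1) (k : ℕ) :
    (∀ i j, 0 ≤ (P ^ k) i j) ∧ (∀ i, ∑ j, (P ^ k) i j = 1) := by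
  induction k with
  | zero =>
    constructor
    · intro i j
      simp [Matrix.one_apply]
      split <;> norm_num
    · intro i
      simp [Matrix.one_apply]
  | succ k ih =>
    rw [pow_succ]
    constructor
    · intro i j
      rw [Matrix.mul_apply]
      exact Finset.sum_nonneg fun l _ => mul_nonneg (ih.1 i l) (h0 l j)
    · intro i
      simp only [Matrix.mul_apply]
      rw [Finset.sum_comm]
      calc ∑ l, ∑ j, (P ^ k) i l * P l j = ∑ l, (P ^ k) i l * ∑ j, P l j := by
            simp [Finset.mul_sum]
        _ = 1 := by simp only [hProw, mul_one]; exact ih.2 i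


lemma iterate_bound (P : Matrix (Fin n) (Fin n) ℝ) (h0 : ∀ i j, 0 ≤ P i j)
    (hProw : ∀ i, ∑ j, P i j = 1) (T : ℕ) (hT : 0 < T) (δ : ℝ)
    (hδ : ∀ i j, δ ≤ (P ^ T) i j) (hc : 0 ≤ 1 - n * δ) (t : ℕ) :
    ∀ x : Fin n → ℝ, ∑ i, x i = 0 →
      NN ((Pᵀ ^ t) *ᵥ x) ≤ (1 - n * δ) ^ (t / T) * NN x := by
  induction t using Nat.strong_induction_on with
  | _ t ih =>
    intro x hx
    by_cases h : t < T
    · rw [Nat.div_eq_of_lt h, pow_zero, one_mul, ← Matrix.transpose_pow]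
      exact NN_mulVecT_le _ (pow_stoch P h0 hProw t).1 (pow_stoch P h0 hProw t).2 x
    · push_neg at h
      have ht : t = (t - T) + T := (Nat.sub_add_cancel h).symm
      have hdiv : t / T = (t - T) / T + 1 := Nat.div_eq_sub_div hT h
      have e1 : (Pᵀ ^ t) *ᵥ x = (Pᵀ ^ (t - T)) *ᵥ ((Pᵀ ^ T) *ᵥ x) := by
        rw [Matrix.mulVec_mulVec, ← pow_add, ← ht]
      have hy : ∑ i, ((Pᵀ ^ T) *ᵥ x) i = 0 := by
        rw [← Matrix.transpose_pow, sum_mulVecT _ (pow_stoch P h0 hProw T).2, hx]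
      have h1 := ih (t - T) (by omega) _ hy
      have h2 : NN ((Pᵀ ^ T) *ᵥ x) ≤ (1 - n * δ) * NN x := by
        rw [← Matrix.transpose_pow]
        exact NN_contract _ δ hδ (pow_stoch P h0 hProw T).2 x hx
      calc NN ((Pᵀ ^ t) *ᵥ x) = NN ((Pᵀ ^ (t - T)) *ᵥ ((Pᵀ ^ T) *ᵥ x)) := by rw [e1]
        _ ≤ (1 - n * δ) ^ ((t - T) / T) * NN ((Pᵀ ^ T) *ᵥ x) := h1
        _ ≤ (1 - n * δ) ^ ((t - T) / T) * ((1 - n * δ) * NN x) :=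
            mul_le_mul_of_nonneg_left h2 (pow_nonneg hc _)
        _ = (1 - n * δ) ^ (t / T) * NN x := by rw [hdiv, pow_succ]; ring

lemma fixed_pow (P : Matrix (Fin n) (Fin n) ℝ) (v : Fin n → ℝ) (hv : Pᵀ *ᵥ v = v) :
    ∀ t : ℕ, (Pᵀ ^ t) *ᵥ v = v := by
  intro t
  induction t with
  | zero => simp [Matrix.one_mulVec]
  | succ t ih => rw [pow_succ', ← Matrix.mulVec_mulVec, ih, hv]

lemma NN_of_dist (q : Fin n → ℝ) (h0 : ∀ i, 0 ≤ q i) (hs : ∑ i, q i = 1) : NN q = 1 := by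
  rw [NN]
  rw [Finset.sum_congr rfl fun i _ => abs_of_nonneg (h0 i)]
  exact hs

end PF14


open PF14

/-- Perron–Frobenius convergence for a primitive row-stochastic matrix: there is a
unique stationary distribution `π`, it has all entries positive, and for every
initial distribution `p₀`, `(Pᵀ)^t *ᵥ p₀` converges to `π` as `t → ∞`. -/
theorem stmt_14 (n : ℕ) (hn : 0 < n) (P : Matrix (Fin n) (Fin n) ℝ)
    (hP0 : ∀ i j, 0 ≤ P i j) (hProw : ∀ i, ∑ j, P i j = 1)
    (hprim : ∃ T : ℕ, ∀ i j, 0 < (P ^ T) i j) :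
    ∃ π : Fin n → ℝ,
      (∀ i, 0 < π i) ∧ (∑ i, π i = 1) ∧ Pᵀ *ᵥ π = π ∧
      (∀ π' : Fin n → ℝ, (∀ i, 0 ≤ π' i) → (∑ i, π' i = 1) → Pᵀ *ᵥ π' = π' → π' = π) ∧
      (∀ p₀ : Fin n → ℝ, (∀ i, 0 ≤ p₀ i) → (∑ i, p₀ i = 1) →
        Tendsto (fun t : ℕ => (Pᵀ ^ t) *ᵥ p₀) atTop (nhds π)) := by
  haveI : Nonempty (Fin n) := ⟨⟨0, hn⟩⟩
  obtain ⟨T₀, hT₀⟩ := hprim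
  set T : ℕ := T₀ + 1 with hTdef
  have hT : 0 < T := Nat.succ_pos _
  -- P^T has all entries positive
  have hPT : ∀ i j, 0 < (P ^ T) i j := by
    intro i j
    rw [hTdef, pow_succ', Matrix.mul_apply]
    refine Finset.sum_pos' (fun k _ => mul_nonneg (hP0 i k) (hT₀ k j).le) ?_
    -- there is k with P i k > 0
    have hk : ∃ k, 0 < P i k := by
      by_contra hcon
      push_neg at hcon
      have hz : ∀ k, P i k = 0 := fun k => le_antisymm (hcon k) (hP0 i k)
      have := hProw i
      simp [hz] at this
    obtain ⟨k, hk⟩ := hk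
    exact ⟨k, Finset.mem_univ k, mul_pos hk (hT₀ k j)⟩
  -- minimal entry δ
  obtain ⟨⟨i₀, j₀⟩, hmin⟩ := Finite.exists_min (fun p : Fin n × Fin n => (P ^ T) p.1 p.2)
  set δ : ℝ := (P ^ T) i₀ j₀ with hδdef
  have hδpos : 0 < δ := hPT i₀ j₀
  have hδ : ∀ i j, δ ≤ (P ^ T) i j := fun i j => hmin (i, j)
  set c : ℝ := 1 - n * δ with hcdef
  have hrowT := (pow_stoch P hP0 hProw T).2
  have h0T := (pow_stoch P hP0 hProw T).1
  have hc0 : 0 ≤ c := by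
    have h1 : (n : ℝ) * δ = ∑ _j : Fin n, δ := by
      rw [Finset.sum_const, Finset.card_univ, Fintype.card_fin, nsmul_eq_mul]
    have h2 : ∑ _j : Fin n, δ ≤ ∑ j, (P ^ T) i₀ j := Finset.sum_le_sum fun j _ => hδ i₀ j
    rw [hrowT i₀] at h2
    simp only [hcdef, sub_nonneg]
    rw [h1]; exact h2
  have hc1 : c < 1 := by
    have : 0 < (n : ℝ) * δ := mul_pos (by exact_mod_cast hn) hδpos
    simp only [hcdef]; linarith
  -- distributions are preserved
  have hpres : ∀ (q : Fin n → ℝ), (∀ i, 0 ≤ q i) → (∑ i, q i = 1) → ∀ t : ℕ,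
      (∀ i, 0 ≤ ((Pᵀ ^ t) *ᵥ q) i) ∧ (∑ i, ((Pᵀ ^ t) *ᵥ q) i = 1) := by
    intro q h0 hs t
    constructor
    · intro i
      rw [← Matrix.transpose_pow, mulVecT_apply]
      exact Finset.sum_nonneg fun j _ => mul_nonneg ((pow_stoch P hP0 hProw t).1 j i) (h0 j)
    · rw [← Matrix.transpose_pow, sum_mulVecT _ (pow_stoch P hP0 hProw t).2, hs]
  -- the iterate bound specialized
  have hib := iterate_bound P hP0 hProw T hT δ hδ hc0
  -- uniform initial distribution
  set u : Fin n → ℝ := fun _ => (n : ℝ)⁻¹ with hudef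
  have hu0 : ∀ i, 0 ≤ u i := fun i => by positivity
  have hus : ∑ i, u i = 1 := by
    rw [hudef]
    rw [Finset.sum_const, Finset.card_univ, Fintype.card_fin, nsmul_eq_mul]
    field_simp
  set p : ℕ → Fin n → ℝ := fun t => (Pᵀ ^ t) *ᵥ u with hpdef
  -- Cauchy estimate
  have key : ∀ s t : ℕ, t ≤ s → NN (p s - p t) ≤ 2 * c ^ (t / T) := by
    intro s t hts
    have e1 : p s - p t = (Pᵀ ^ t) *ᵥ ((Pᵀ ^ (s - t)) *ᵥ u - u) := by
      rw [Matrix.mulVec_sub, Matrix.mulVec_mulVec, ← pow_add,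
        Nat.add_sub_cancel' hts]
    have hz : ∑ i, ((Pᵀ ^ (s - t)) *ᵥ u - u) i = 0 := by
      have := (hpres u hu0 hus (s - t)).2
      simp only [Pi.sub_apply, Finset.sum_sub_distrib, this, hus, sub_self]
    have h2 : NN ((Pᵀ ^ (s - t)) *ᵥ u - u) ≤ 2 := by
      refine (NN_sub_le _ _).trans ?_
      rw [NN_of_dist _ (hpres u hu0 hus (s - t)).1 (hpres u hu0 hus (s - t)).2,
        NN_of_dist u hu0 hus]
      norm_num
    calc NN (p s - p t) ≤ c ^ (t / T) * NN ((Pᵀ ^ (s - t)) *ᵥ u - u) := by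
          rw [e1]; exact hib t _ hz
      _ ≤ c ^ (t / T) * 2 := mul_le_mul_of_nonneg_left h2 (pow_nonneg hc0 _)
      _ = 2 * c ^ (t / T) := by ring
  have hmono : ∀ a b : ℕ, a ≤ b → c ^ (b / T) ≤ c ^ (a / T) := fun a b hab =>
    pow_le_pow_of_le_one hc0 hc1.le (Nat.div_le_div_right hab)
  have hcau : CauchySeq p := by
    refine cauchySeq_of_le_tendsto_0 (fun N => 2 * c ^ (N / T)) ?_ ?_
    · intro a b N hNa hNb
      rw [dist_eq_norm]
      rcases le_total a b with hab | hab
      · calc ‖p a - p b‖ = ‖p b - p a‖ := by rw [norm_sub_rev]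
          _ ≤ NN (p b - p a) := norm_le_NN _
          _ ≤ 2 * c ^ (a / T) := key b a hab
          _ ≤ 2 * c ^ (N / T) := by nlinarith [hmono N a hNa, pow_nonneg hc0 (a / T)]
      · calc ‖p a - p b‖ ≤ NN (p a - p b) := norm_le_NN _
          _ ≤ 2 * c ^ (b / T) := key a b hab
          _ ≤ 2 * c ^ (N / T) := by nlinarith [hmono N b hNb, pow_nonneg hc0 (b / T)]
    · have hdivT : Tendsto (fun N : ℕ => N / T) atTop atTop :=
        tendsto_atTop_atTop.2 fun b => ⟨b * T, fun a ha => (Nat.le_div_iff_mul_le hT).2 ha⟩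
      have hcpow : Tendsto (fun N : ℕ => c ^ (N / T)) atTop (nhds 0) :=
        (tendsto_pow_atTop_nhds_zero_of_lt_one hc0 hc1).comp hdivT
      simpa using hcpow.const_mul 2
  obtain ⟨π, hπlim⟩ := cauchySeq_tendsto_of_complete hcau
  -- coordinatewise limits
  have hcoord : ∀ i, Tendsto (fun t => p t i) atTop (nhds (π i)) := fun i =>
    ((continuous_apply i).tendsto π).comp hπlim
  -- sum = 1
  have hπs : ∑ i, π i = 1 := by
    have l1 : Tendsto (fun t => ∑ i, p t i) atTop (nhds (∑ i, π i)) :=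
      tendsto_finset_sum _ fun i _ => hcoord i
    have l2 : (fun t => ∑ i, p t i) = fun _ => (1 : ℝ) := by
      funext t; exact (hpres u hu0 hus t).2
    rw [l2] at l1
    exact (tendsto_nhds_unique tendsto_const_nhds l1).symm
  -- nonneg
  have hπ0 : ∀ i, 0 ≤ π i := fun i =>
    ge_of_tendsto' (hcoord i) fun t => (hpres u hu0 hus t).1 i
  -- fixed point
  have hcont : Continuous fun x : Fin n → ℝ => Pᵀ *ᵥ x :=
    LinearMap.continuous_of_finiteDimensional (Matrix.mulVecLin Pᵀ)
  have hπfix : Pᵀ *ᵥ π = π := by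
    have l1 : Tendsto (fun t => Pᵀ *ᵥ p t) atTop (nhds (Pᵀ *ᵥ π)) :=
      (hcont.tendsto π).comp hπlim
    have l2 : (fun t => Pᵀ *ᵥ p t) = fun t => p (t + 1) := by
      funext t
      simp only [hpdef, Matrix.mulVec_mulVec, ← pow_succ']
    rw [l2] at l1
    have l3 : Tendsto (fun t => p (t + 1)) atTop (nhds π) :=
      hπlim.comp (tendsto_add_atTop_nat 1)
    exact tendsto_nhds_unique l1 l3
  have hπfixT : (Pᵀ ^ T) *ᵥ π = π := fixed_pow P π hπfix T
  -- positivity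
  have hπpos : ∀ i, 0 < π i := by
    intro i
    have e : π i = ∑ j, (P ^ T) j i * π j := by
      conv_lhs => rw [← hπfixT]
      rw [← Matrix.transpose_pow, mulVecT_apply]
    have h1 : ∑ j, δ * π j ≤ ∑ j, (P ^ T) j i * π j :=
      Finset.sum_le_sum fun j _ => mul_le_mul_of_nonneg_right (hδ j i) (hπ0 j)
    have h2 : ∑ j, δ * π j = δ := by rw [← Finset.mul_sum, hπs, mul_one]
    rw [e]
    calc (0 : ℝ) < δ := hδpos
      _ = ∑ j, δ * π j := h2.symm
      _ ≤ _ := h1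
  -- uniqueness
  have huniq : ∀ π' : Fin n → ℝ, (∀ i, 0 ≤ π' i) → (∑ i, π' i = 1) → Pᵀ *ᵥ π' = π' →
      π' = π := by
    intro π' _ hs' hfix'
    set x : Fin n → ℝ := π' - π with hxdef
    have hxs : ∑ i, x i = 0 := by
      simp only [hxdef, Pi.sub_apply, Finset.sum_sub_distrib, hs', hπs, sub_self]
    have hxfix : (Pᵀ ^ T) *ᵥ x = x := by
      rw [hxdef, Matrix.mulVec_sub, fixed_pow P π' hfix' T, hπfixT]
    have hle : NN x ≤ c * NN x := by
      conv_lhs => rw [← hxfix, ← Matrix.transpose_pow]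
      exact NN_contract _ δ hδ hrowT x hxs
    have hNN0 : NN x = 0 := by nlinarith [NN_nonneg x]
    funext i
    have h2 : x i = 0 := abs_eq_zero.mp (le_antisymm ((abs_le_NN x i).trans hNN0.le)
      (abs_nonneg _))
    have : π' i - π i = 0 := h2
    linarith
  -- convergence for arbitrary initial distribution
  have hconv : ∀ p₀ : Fin n → ℝ, (∀ i, 0 ≤ p₀ i) → (∑ i, p₀ i = 1) →
      Tendsto (fun t : ℕ => (Pᵀ ^ t) *ᵥ p₀) atTop (nhds π) := by
    intro p₀ h₀ hs₀
    rw [← tendsto_sub_nhds_zero_iff, tendsto_zero_iff_norm_tendsto_zero]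
    have hz : ∑ i, (p₀ - π) i = 0 := by
      simp only [Pi.sub_apply, Finset.sum_sub_distrib, hs₀, hπs, sub_self]
    refine squeeze_zero (g := fun t => c ^ (t / T) * NN (p₀ - π))
      (fun t => norm_nonneg _) (fun t => ?_) ?_
    · calc ‖(Pᵀ ^ t) *ᵥ p₀ - π‖ ≤ NN ((Pᵀ ^ t) *ᵥ p₀ - π) := norm_le_NN _
        _ = NN ((Pᵀ ^ t) *ᵥ (p₀ - π)) := by
            rw [Matrix.mulVec_sub, fixed_pow P π hπfix t]
        _ ≤ c ^ (t / T) * NN (p₀ - π) := hib t _ hz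
    · have hdivT : Tendsto (fun N : ℕ => N / T) atTop atTop :=
        tendsto_atTop_atTop.2 fun b => ⟨b * T, fun a ha => (Nat.le_div_iff_mul_le hT).2 ha⟩
      have hcpow : Tendsto (fun N : ℕ => c ^ (N / T)) atTop (nhds 0) :=
        (tendsto_pow_atTop_nhds_zero_of_lt_one hc0 hc1).comp hdivT
      simpa using hcpow.mul_const (NN (p₀ - π))
  exact ⟨π, hπpos, hπs, hπfix, huniq, hconv⟩
end
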